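/- Let d: X × X̂ → [0, d*] be a distortion measure on finite alphabets such that for each x ∈ X there exists x̂ ∈ X̂ with d(x,x̂) = 0, and let d̃ be the minimum nonzero value of d. Then for all probability distributions p, q on X with ||p-q||_1 ≤ d̃/(4d*) and all D ≥ 0: |R(p,D) - R(q,D)| ≤ (7d*/d̃) · ||p-q||_1 · ln(|X|·|X̂| / ||p-q||_1). -/

import Mathlib

open BigOperators Finset Real

def IsPMF {X : Type*} [Fintype X] (p : X → ℝ) : Prop :=
  (∀ x, 0 ≤ p x) ∧ ∑ x, p x = 1

def IsChannel {X Xh : Type*} [Fintype X] [Fintype Xh] (W : X → Xh → ℝ) : Prop :=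
  (∀ x y, 0 ≤ W x y) ∧ ∀ x, ∑ y, W x y = 1

noncomputable def avgDist {X Xh : Type*} [Fintype X] [Fintype Xh]
    (d : X → Xh → ℝ) (p : X → ℝ) (W : X → Xh → ℝ) : ℝ :=
  ∑ x, ∑ y, p x * W x y * d x y

noncomputable def ent {α : Type*} [Fintype α] (p : α → ℝ) : ℝ :=
  -∑ a, p a * Real.log (p a)

noncomputable def mutInfo {X Xh : Type*} [Fintype X] [Fintype Xh]
    (p : X → ℝ) (W : X → Xh → ℝ) : ℝ :=
  ent p + ent (fun y => ∑ x, p x * W x y) - ent (fun z : X × Xh => p z.1 * W z.1 z.2)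

/-- The IID rate-distortion function `R(p, D)` (in nats). -/
noncomputable def RD {X Xh : Type*} [Fintype X] [Fintype Xh]
    (d : X → Xh → ℝ) (p : X → ℝ) (D : ℝ) : ℝ :=
  sInf {r | ∃ W : X → Xh → ℝ, IsChannel W ∧ avgDist d p W ≤ D ∧ r = mutInfo p W}

/-! A channel `W` meeting distortion `D` for `q` has distortion at most `D + d* t` for `p`, where
`t = ‖p - q‖₁`. Moving the fraction `l = d* t / (D + d* t)` of the mass that `W` puts on letters of
positive distortion onto a zero-distortion letter brings the distortion back to `D`; since that
mass is at most the distortion divided by `d̃`, the joint distribution moves by at most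
`s = 2 d* t / d̃` in `ℓ¹`. Mutual information is a signed sum of three entropies, each controlled
by Fannes' inequality `|H a - H b| ≤ s log (N / s)`, so `R(p, D) ≤ R(q, D) + 3 t log (M / t) +
2 s log (M / s)` with `M = |X| |X̂|`, which is at most `(7 d* / d̃) t log (M / t)`. -/

lemma self_le_negMulLog {u : ℝ} (hu0 : 0 ≤ u) (hu : u ≤ exp (-1)) : u ≤ negMulLog u := by
  rcases hu0.eq_or_lt with rfl | hu0
  · simp
  have hlog : log u ≤ -1 := (log_le_iff_le_exp hu0).2 hu
  rw [negMulLog]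
  nlinarith

lemma negMulLog_one_sub_le {u : ℝ} (hu0 : 0 ≤ u) (hu : u ≤ 1 / 2) :
    negMulLog (1 - u) ≤ negMulLog u := by
  rcases le_total u (exp (-1)) with hue | hue
  · calc negMulLog (1 - u) ≤ 1 - (1 - u) := negMulLog_le_one_sub_self (by linarith)
      _ = u := by ring
      _ ≤ negMulLog u := self_le_negMulLog hu0 hue
  -- on `(e⁻¹, 1/2)` both `log t` and `log (1 - t)` exceed `-1`, so the derivative is negative
  have hanti : StrictAntiOn (fun t => negMulLog t - negMulLog (1 - t))
      (Set.Icc (exp (-1)) (1 / 2)) := by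
    refine strictAntiOn_of_deriv_neg (convex_Icc _ _) (by fun_prop) fun t ht => ?_
    rw [interior_Icc] at ht
    have ht0 : 0 < t := (exp_pos _).trans ht.1
    have ht1 : exp (-1) < 1 - t := by linarith [ht.2, exp_neg_one_lt_half]
    have hderiv : HasDerivAt (fun t => negMulLog t - negMulLog (1 - t))
        ((-log t - 1) - -(-log (1 - t) - 1)) t :=
      (hasDerivAt_negMulLog ht0.ne').sub
        ((hasDerivAt_negMulLog (by linarith [exp_pos (-1)])).comp_const_sub 1 t)
    rw [hderiv.deriv]
    have h1 := (lt_log_iff_exp_lt ht0).2 ht.1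
    have h2 := (lt_log_iff_exp_lt (by linarith [exp_pos (-1)])).2 ht1
    linarith
  rcases hu.eq_or_lt with rfl | hlt
  · norm_num
  · have := hanti ⟨hue, hu⟩ ⟨hue.trans hu, le_rfl⟩ hlt
    norm_num at this
    linarith

lemma mul_log_le_mul_log_of_le {a b : ℝ} (ha : 0 ≤ a) (hab : a ≤ b) : a * log a ≤ a * log b := by
  rcases ha.eq_or_lt with rfl | ha
  · simp
  · exact mul_le_mul_of_nonneg_left (log_le_log ha hab) ha.le

lemma negMulLog_add_le {x u : ℝ} (hx : 0 ≤ x) (hu : 0 ≤ u) :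
    negMulLog (x + u) ≤ negMulLog x + negMulLog u := by
  have h1 := mul_log_le_mul_log_of_le hx (le_add_of_nonneg_right hu)
  have h2 := mul_log_le_mul_log_of_le hu (le_add_of_nonneg_left hx)
  simp only [negMulLog]
  linarith

lemma negMulLog_sub_negMulLog_add_le {x u : ℝ} (hx : 0 ≤ x) (hu : 0 ≤ u) (hxu : x + u ≤ 1) :
    negMulLog x - negMulLog (x + u) ≤ negMulLog (1 - u) := by
  rcases (show x ≤ 1 by linarith).eq_or_lt with rfl | hx1
  · obtain rfl : u = 0 := by linarith
    simp
  -- `x + u` and `1 - u` are the combinations `(1 - l) x + l` and `l x + (1 - l)` of `x` and `1`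
  set l := u / (1 - x)
  have hl0 : 0 ≤ l := div_nonneg hu (by linarith)
  have hl1 : l ≤ 1 := (div_le_one (by linarith)).2 (by linarith)
  have hconc := concaveOn_negMulLog.2 (Set.mem_Ici.2 hx) (Set.mem_Ici.2 zero_le_one)
  have h1 := hconc (sub_nonneg.2 hl1) hl0 (by ring)
  have h2 := hconc hl0 (sub_nonneg.2 hl1) (by ring)
  have e1 : (1 - l) • x + l • (1 : ℝ) = x + u := by
    simp only [smul_eq_mul, l]; field_simp; ring
  have e2 : l • x + (1 - l) • (1 : ℝ) = 1 - u := by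
    simp only [smul_eq_mul, l]; field_simp; ring
  rw [e1] at h1
  rw [e2] at h2
  simp only [smul_eq_mul, negMulLog_one, mul_zero, add_zero] at h1 h2
  linarith

lemma abs_negMulLog_sub_le_of_le {x y : ℝ} (hx : 0 ≤ x) (hy : y ≤ 1) (hxy : x ≤ y)
    (h : y - x ≤ 1 / 2) : |negMulLog x - negMulLog y| ≤ negMulLog (y - x) := by
  have hsplit : y = x + (y - x) := by ring
  have hsub := negMulLog_add_le hx (sub_nonneg.2 hxy)
  have hconc := negMulLog_sub_negMulLog_add_le hx (sub_nonneg.2 hxy) (by linarith)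
  have hsym := negMulLog_one_sub_le (sub_nonneg.2 hxy) h
  rw [← hsplit] at hsub hconc
  rw [abs_sub_le_iff]
  constructor <;> linarith

lemma abs_negMulLog_sub_le {x y : ℝ} (hx0 : 0 ≤ x) (hx1 : x ≤ 1) (hy0 : 0 ≤ y) (hy1 : y ≤ 1)
    (h : |x - y| ≤ 1 / 2) : |negMulLog x - negMulLog y| ≤ negMulLog |x - y| := by
  rcases le_total x y with hxy | hyx
  · rw [abs_sub_comm x y, abs_of_nonneg (sub_nonneg.2 hxy)] at h ⊢
    exact abs_negMulLog_sub_le_of_le hx0 hy1 hxy h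
  · rw [abs_of_nonneg (sub_nonneg.2 hyx)] at h ⊢
    rw [abs_sub_comm]
    exact abs_negMulLog_sub_le_of_le hy0 hx1 hyx h

lemma sum_negMulLog_le {α : Type*} [Fintype α] [Nonempty α] (ε : α → ℝ) (hε : ∀ a, 0 ≤ ε a) :
    ∑ a, negMulLog (ε a) ≤ (∑ a, ε a) * log (Fintype.card α / ∑ a, ε a) := by
  set n : ℝ := (Fintype.card α : ℝ)
  set S := ∑ a, ε a
  have hn : 0 < n := Nat.cast_pos.2 Fintype.card_pos
  have hJ := concaveOn_negMulLog.le_map_sum (t := univ) (w := fun _ => n⁻¹) (p := ε)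
    (fun _ _ => by positivity) (by simp [n]) (fun a _ => hε a)
  simp only [smul_eq_mul, ← mul_sum] at hJ
  calc ∑ a, negMulLog (ε a) = n * (n⁻¹ * ∑ a, negMulLog (ε a)) := by field_simp
    _ ≤ n * negMulLog (n⁻¹ * S) := by gcongr
    _ = S * log (n / S) := by
      rw [negMulLog, inv_mul_eq_div, ← inv_div, log_inv]
      field_simp

lemma mul_log_div_nonneg {s N : ℝ} (hs : 0 ≤ s) (hsN : s ≤ N) : 0 ≤ s * log (N / s) := by
  rcases hs.eq_or_lt with rfl | hs
  · simp
  · exact mul_nonneg hs.le (log_nonneg ((one_le_div hs).2 hsN))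

lemma mul_log_div_le_mul_log_div {a b N : ℝ} (ha : 0 ≤ a) (hab : a ≤ b) (hbN : exp 1 * b ≤ N) :
    a * log (N / a) ≤ b * log (N / b) := by
  have hb : 0 ≤ b := ha.trans hab
  rcases ha.eq_or_lt with rfl | ha
  · simpa using
      mul_log_div_nonneg hb ((le_mul_of_one_le_left hb (one_le_exp zero_le_one)).trans hbN)
  have hb : 0 < b := ha.trans_le hab
  have hN : 0 < N := lt_of_lt_of_le (by positivity) hbN
  have hlog : 1 ≤ log (N / b) := by
    rw [le_log_iff_exp_le (by positivity), le_div_iff₀ hb]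
    exact hbN
  have hsplit : log (N / a) = log (N / b) + log (b / a) := by
    rw [← log_mul (by positivity) (by positivity)]
    field_simp
  have hba : a * log (b / a) ≤ b - a := by
    calc a * log (b / a) ≤ a * (b / a - 1) :=
          mul_le_mul_of_nonneg_left (log_le_sub_one_of_pos (div_pos hb ha)) ha.le
      _ = b - a := by field_simp
  rw [hsplit]
  nlinarith

lemma mul_log_div_le_mul_log_div_of_le {s N M : ℝ} (hs : 0 ≤ s) (hN : 0 < N) (hNM : N ≤ M) :
    s * log (N / s) ≤ s * log (M / s) := by
  rcases hs.eq_or_lt with rfl | hs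
  · simp
  · exact mul_le_mul_of_nonneg_left (log_le_log (div_pos hN hs) (by gcongr)) hs.le

lemma sum_mul_log_le_sum_mul_log {α : Type*} [Fintype α] {p q : α → ℝ} (hp : ∀ a, 0 ≤ p a)
    (hq : ∀ a, 0 ≤ q a) (hpq : ∀ a, q a = 0 → p a = 0) (hsum : ∑ a, q a ≤ ∑ a, p a) :
    ∑ a, p a * log (q a) ≤ ∑ a, p a * log (p a) := by
  have key : ∀ a, p a * log (q a) - p a * log (p a) ≤ q a - p a := by
    intro a
    rcases (hp a).eq_or_lt with h0 | hpa
    · simpa [← h0] using hq a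
    have hqa : 0 < q a := (hq a).lt_of_ne fun h => hpa.ne' (hpq a h.symm)
    calc p a * log (q a) - p a * log (p a) = p a * log (q a / p a) := by
          rw [log_div hqa.ne' hpa.ne']; ring
      _ ≤ p a * (q a / p a - 1) :=
          mul_le_mul_of_nonneg_left (log_le_sub_one_of_pos (div_pos hqa hpa)) hpa.le
      _ = q a - p a := by field_simp
  have := sum_le_sum fun a (_ : a ∈ univ) => key a
  simp only [sum_sub_distrib] at this
  linarith

lemma ent_eq_sum_negMulLog {α : Type*} [Fintype α] (p : α → ℝ) :
    ent p = ∑ a, negMulLog (p a) := by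
  simp [ent, negMulLog]

section PMF

variable {α : Type*} [Fintype α] {a b : α → ℝ}

lemma IsPMF.le_one (ha : IsPMF a) (z : α) : a z ≤ 1 :=
  ha.2 ▸ single_le_sum (fun w _ => ha.1 w) (mem_univ z)

lemma IsPMF.nonempty (ha : IsPMF a) : Nonempty α := by
  by_contra h
  rw [not_nonempty_iff] at h
  simpa using ha.2

lemma IsPMF.two_le_card (ha : IsPMF a) (hb : IsPMF b) (hab : 0 < ∑ z, |a z - b z|) :
    2 ≤ Fintype.card α := by
  by_contra! h
  have : Subsingleton α := Fintype.card_le_one_iff_subsingleton.1 (by omega)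
  have hone : ∀ c : α → ℝ, IsPMF c → ∀ z, c z = 1 := fun c hc z => by
    rw [← hc.2, Fintype.sum_subsingleton _ z]
  simp [hone a ha, hone b hb] at hab

lemma IsPMF.sum_abs_sub_le_card (ha : IsPMF a) (hb : IsPMF b) :
    ∑ z, |a z - b z| ≤ Fintype.card α := by
  rcases (sum_nonneg fun z _ => abs_nonneg (a z - b z)).eq_or_lt with h | h
  · rw [← h]
    positivity
  calc ∑ z, |a z - b z| ≤ ∑ z, (a z + b z) :=
        sum_le_sum fun z _ => abs_sub_le_iff.2 ⟨by linarith [hb.1 z], by linarith [ha.1 z]⟩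
    _ = 2 := by rw [sum_add_distrib, ha.2, hb.2]; norm_num
    _ ≤ Fintype.card α := by exact_mod_cast ha.two_le_card hb h

/-- Fannes' inequality. -/
lemma abs_ent_sub_le (ha : IsPMF a) (hb : IsPMF b) {s : ℝ} (hab : ∑ z, |a z - b z| ≤ s)
    (hs : s ≤ 1 / 2) : |ent a - ent b| ≤ s * log (Fintype.card α / s) := by
  have := ha.nonempty
  have ht0 : 0 ≤ ∑ z, |a z - b z| := sum_nonneg fun z _ => abs_nonneg _
  have hpoint : ∀ z, |a z - b z| ≤ 1 / 2 := fun z =>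
    (single_le_sum (fun w _ => abs_nonneg (a w - b w)) (mem_univ z)).trans (hab.trans hs)
  have hη : |ent a - ent b| ≤ ∑ z, negMulLog |a z - b z| := by
    rw [ent_eq_sum_negMulLog, ent_eq_sum_negMulLog, ← sum_sub_distrib]
    exact (abs_sum_le_sum_abs _ _).trans (sum_le_sum fun z _ =>
      abs_negMulLog_sub_le (ha.1 z) (ha.le_one z) (hb.1 z) (hb.le_one z) (hpoint z))
  refine hη.trans ((sum_negMulLog_le _ fun z => abs_nonneg _).trans ?_)
  rcases ht0.eq_or_lt with ht | ht
  · have hcard : (1 : ℝ) ≤ Fintype.card α := Nat.one_le_cast.2 Fintype.card_pos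
    rw [← ht]
    simpa using mul_log_div_nonneg (ht0.trans hab) (by linarith)
  · have hcard : (2 : ℝ) ≤ Fintype.card α := by exact_mod_cast ha.two_le_card hb ht
    exact mul_log_div_le_mul_log_div ht.le hab (by nlinarith [exp_one_lt_d9])

end PMF

section Channel

variable {X Xh : Type*} [Fintype X]

def outDist (p : X → ℝ) (W : X → Xh → ℝ) : Xh → ℝ := fun y => ∑ x, p x * W x y

def jointDist (p : X → ℝ) (W : X → Xh → ℝ) : X × Xh → ℝ := fun z => p z.1 * W z.1 z.2

lemma outDist_eq_sum_jointDist (p : X → ℝ) (W : X → Xh → ℝ) (y : Xh) :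
    outDist p W y = ∑ x, jointDist p W (x, y) := rfl

variable [Fintype Xh]

lemma mutInfo_eq (p : X → ℝ) (W : X → Xh → ℝ) :
    mutInfo p W = ent p + ent (outDist p W) - ent (jointDist p W) := rfl

variable {p : X → ℝ} {W : X → Xh → ℝ}

lemma sum_jointDist_snd (hW : IsChannel W) (x : X) : ∑ y, jointDist p W (x, y) = p x := by
  simp [jointDist, ← mul_sum, hW.2 x]

lemma IsPMF.jointDist (hp : IsPMF p) (hW : IsChannel W) : IsPMF (jointDist p W) :=
  ⟨fun z => mul_nonneg (hp.1 _) (hW.1 _ _), by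
    rw [Fintype.sum_prod_type]
    simp_rw [sum_jointDist_snd hW]
    exact hp.2⟩

lemma IsPMF.outDist (hp : IsPMF p) (hW : IsChannel W) : IsPMF (outDist p W) :=
  ⟨fun y => sum_nonneg fun x _ => (hp.jointDist hW).1 (x, y), by
    simp_rw [outDist_eq_sum_jointDist]
    rw [sum_comm, ← Fintype.sum_prod_type]
    exact (hp.jointDist hW).2⟩

lemma jointDist_le_fst (hp : IsPMF p) (hW : IsChannel W) (z : X × Xh) :
    jointDist p W z ≤ p z.1 := by
  rw [← sum_jointDist_snd (p := p) hW z.1]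
  exact single_le_sum (fun y _ => (hp.jointDist hW).1 (z.1, y)) (mem_univ z.2)

lemma jointDist_le_outDist (hp : IsPMF p) (hW : IsChannel W) (z : X × Xh) :
    jointDist p W z ≤ outDist p W z.2 := by
  rw [outDist_eq_sum_jointDist]
  exact single_le_sum (fun x _ => (hp.jointDist hW).1 (x, z.2)) (mem_univ z.1)

lemma sum_jointDist_mul_log_fst (hW : IsChannel W) :
    ∑ z, jointDist p W z * log (p z.1) = ∑ x, p x * log (p x) := by
  rw [Fintype.sum_prod_type]
  simp_rw [← sum_mul, sum_jointDist_snd hW]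

lemma sum_jointDist_mul_log_snd :
    ∑ z, jointDist p W z * log (outDist p W z.2) = ∑ y, outDist p W y * log (outDist p W y) := by
  rw [Fintype.sum_prod_type, sum_comm]
  simp_rw [← sum_mul, ← outDist_eq_sum_jointDist]

/-- Gibbs' inequality against the product of the marginals. -/
lemma mutInfo_nonneg (hp : IsPMF p) (hW : IsChannel W) : 0 ≤ mutInfo p W := by
  have hj := hp.jointDist hW
  have hprod0 : ∀ z : X × Xh, 0 ≤ p z.1 * outDist p W z.2 := fun z =>
    mul_nonneg (hp.1 _) ((hp.outDist hW).1 _)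
  have hsupp : ∀ z : X × Xh, p z.1 * outDist p W z.2 = 0 → jointDist p W z = 0 := fun z h =>
    (mul_eq_zero.1 h).elim (fun h1 => le_antisymm (h1 ▸ jointDist_le_fst hp hW z) (hj.1 z))
      (fun h2 => le_antisymm (h2 ▸ jointDist_le_outDist hp hW z) (hj.1 z))
  have hsum : ∑ z : X × Xh, p z.1 * outDist p W z.2 ≤ ∑ z, jointDist p W z := by
    rw [Fintype.sum_prod_type, ← sum_mul_sum, hp.2, (hp.outDist hW).2, hj.2, one_mul]
  have hsplit : ∀ z : X × Xh, jointDist p W z * log (p z.1 * outDist p W z.2)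
      = jointDist p W z * log (p z.1) + jointDist p W z * log (outDist p W z.2) := fun z => by
    by_cases hz : jointDist p W z = 0
    · simp [hz]
    · obtain ⟨h1, h2⟩ := mul_ne_zero_iff.1 fun h => hz (hsupp z h)
      rw [log_mul h1 h2, mul_add]
  have hG := sum_mul_log_le_sum_mul_log hj.1 hprod0 hsupp hsum
  rw [sum_congr rfl fun z _ => hsplit z, sum_add_distrib, sum_jointDist_mul_log_fst hW,
    sum_jointDist_mul_log_snd] at hG
  rw [mutInfo_eq]
  simp only [ent]
  linarith

lemma mutInfo_le_ent_outDist (hp : IsPMF p) (hW : IsChannel W) :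
    mutInfo p W ≤ ent (outDist p W) := by
  have h : ∑ z, jointDist p W z * log (jointDist p W z) ≤ ∑ x, p x * log (p x) := by
    rw [← sum_jointDist_mul_log_fst hW]
    exact sum_le_sum fun z _ =>
      mul_log_le_mul_log_of_le ((hp.jointDist hW).1 z) (jointDist_le_fst hp hW z)
  rw [mutInfo_eq]
  simp only [ent]
  linarith

end Channel

section Continuity

variable {X Xh : Type*} [Fintype X] [Fintype Xh] {p q p' : X → ℝ} {W W' : X → Xh → ℝ}

lemma sum_abs_sub_outDist_le :
    ∑ y, |outDist p W y - outDist p' W' y| ≤ ∑ z, |jointDist p W z - jointDist p' W' z| := by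
  simp_rw [outDist_eq_sum_jointDist, ← sum_sub_distrib]
  rw [Fintype.sum_prod_type_right]
  exact sum_le_sum fun y _ => abs_sum_le_sum_abs _ _

lemma sum_abs_sub_jointDist_of_channel (hW : IsChannel W) :
    ∑ z, |jointDist p W z - jointDist q W z| = ∑ x, |p x - q x| := by
  rw [Fintype.sum_prod_type]
  refine sum_congr rfl fun x _ => ?_
  simp_rw [jointDist, ← sub_mul, abs_mul, abs_of_nonneg (hW.1 x _), ← mul_sum, hW.2 x, mul_one]

lemma sum_abs_sub_jointDist_of_input (hp : IsPMF p) :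
    ∑ z, |jointDist p W z - jointDist p W' z| = ∑ x, p x * ∑ y, |W x y - W' x y| := by
  rw [Fintype.sum_prod_type]
  refine sum_congr rfl fun x _ => ?_
  simp_rw [jointDist, ← mul_sub, abs_mul, abs_of_nonneg (hp.1 x), mul_sum]

lemma abs_mutInfo_sub_le (p p' : X → ℝ) (W W' : X → Xh → ℝ) :
    |mutInfo p W - mutInfo p' W'| ≤ |ent p - ent p'| + |ent (outDist p W) - ent (outDist p' W')|
      + |ent (jointDist p W) - ent (jointDist p' W')| := by
  have h := abs_add_three (ent p - ent p') (ent (outDist p W) - ent (outDist p' W'))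
    (-(ent (jointDist p W) - ent (jointDist p' W')))
  rw [abs_neg] at h
  rw [mutInfo_eq, mutInfo_eq]
  exact (congrArg abs (by ring)).trans_le h

lemma abs_ent_sub_le_of_card_le {α : Type*} [Fintype α] {a b : α → ℝ} (ha : IsPMF a)
    (hb : IsPMF b) {s M : ℝ} (hab : ∑ z, |a z - b z| ≤ s) (hs : s ≤ 1 / 2)
    (hM : (Fintype.card α : ℝ) ≤ M) : |ent a - ent b| ≤ s * log (M / s) := by
  have := ha.nonempty
  exact (abs_ent_sub_le ha hb hab hs).trans (mul_log_div_le_mul_log_div_of_le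
    ((sum_nonneg fun z _ => abs_nonneg _).trans hab) (Nat.cast_pos.2 Fintype.card_pos) hM)

lemma abs_mutInfo_sub_le_of_input (hp : IsPMF p) (hq : IsPMF q) (hW : IsChannel W) {s : ℝ}
    (hpq : ∑ x, |p x - q x| ≤ s) (hs : s ≤ 1 / 2) :
    |mutInfo p W - mutInfo q W| ≤ 3 * (s * log (Fintype.card X * Fintype.card Xh / s)) := by
  have := hp.nonempty
  have := (hp.outDist hW).nonempty
  have hX : (1 : ℝ) ≤ Fintype.card X := Nat.one_le_cast.2 Fintype.card_pos
  have hXh : (1 : ℝ) ≤ Fintype.card Xh := Nat.one_le_cast.2 Fintype.card_pos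
  have hjoint := sum_abs_sub_jointDist_of_channel (p := p) (q := q) hW
  have h1 := abs_ent_sub_le_of_card_le hp hq hpq hs (le_mul_of_one_le_right (by linarith) hXh)
  have h2 := abs_ent_sub_le_of_card_le (hp.outDist hW) (hq.outDist hW)
    (sum_abs_sub_outDist_le.trans (hjoint.trans_le hpq)) hs
    (le_mul_of_one_le_left (by linarith) hX)
  have h3 := abs_ent_sub_le_of_card_le (hp.jointDist hW) (hq.jointDist hW)
    (hjoint.trans_le hpq) hs (M := Fintype.card X * Fintype.card Xh)
    (by rw [Fintype.card_prod, Nat.cast_mul])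
  linarith [abs_mutInfo_sub_le p q W W]

lemma abs_mutInfo_sub_le_of_channel (hp : IsPMF p) (hW : IsChannel W) (hW' : IsChannel W')
    {s : ℝ} (hWW' : ∑ z, |jointDist p W z - jointDist p W' z| ≤ s) (hs : s ≤ 1 / 2) :
    |mutInfo p W - mutInfo p W'| ≤ 2 * (s * log (Fintype.card X * Fintype.card Xh / s)) := by
  have := hp.nonempty
  have hX : (1 : ℝ) ≤ Fintype.card X := Nat.one_le_cast.2 Fintype.card_pos
  have h2 := abs_ent_sub_le_of_card_le (hp.outDist hW) (hp.outDist hW')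
    (sum_abs_sub_outDist_le.trans hWW') hs (le_mul_of_one_le_left (by positivity) hX)
  have h3 := abs_ent_sub_le_of_card_le (hp.jointDist hW) (hp.jointDist hW') hWW' hs
    (M := Fintype.card X * Fintype.card Xh) (by rw [Fintype.card_prod, Nat.cast_mul])
  have h := abs_mutInfo_sub_le p p W W'
  rw [sub_self, abs_zero] at h
  linarith

end Continuity

section Modification

variable {X Xh : Type*} [Fintype X] [Fintype Xh] {d : X → Xh → ℝ} {p q : X → ℝ}
  {W : X → Xh → ℝ}

lemma avgDist_sub_le {dstar : ℝ} (hd0 : ∀ x y, 0 ≤ d x y) (hdstar : ∀ x y, d x y ≤ dstar)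
    (hW : IsChannel W) : avgDist d p W - avgDist d q W ≤ dstar * ∑ x, |p x - q x| := by
  have hrow : ∀ x, 0 ≤ ∑ y, W x y * d x y ∧ ∑ y, W x y * d x y ≤ dstar := fun x =>
    ⟨sum_nonneg fun y _ => mul_nonneg (hW.1 x y) (hd0 x y),
      (sum_le_sum fun y _ => mul_le_mul_of_nonneg_left (hdstar x y) (hW.1 x y)).trans_eq
        (by rw [← sum_mul, hW.2 x, one_mul])⟩
  have hsplit : ∀ r : X → ℝ, avgDist d r W = ∑ x, r x * ∑ y, W x y * d x y := fun r => by
    simp_rw [avgDist, mul_sum, mul_assoc]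
  rw [hsplit, hsplit, ← sum_sub_distrib, mul_sum]
  refine sum_le_sum fun x _ => ?_
  rw [← sub_mul, mul_comm dstar]
  exact (mul_le_mul_of_nonneg_right (le_abs_self _) (hrow x).1).trans
    (mul_le_mul_of_nonneg_left (hrow x).2 (abs_nonneg _))

noncomputable def posDistMass (d W : X → Xh → ℝ) (x : X) : ℝ :=
  ∑ y, if d x y = 0 then 0 else W x y

lemma mul_sum_posDistMass_le {dtil : ℝ} (hdtil : ∀ x y, d x y ≠ 0 → dtil ≤ d x y)
    (hp : IsPMF p) (hW : IsChannel W) : dtil * ∑ x, p x * posDistMass d W x ≤ avgDist d p W := by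
  simp only [avgDist, posDistMass, mul_sum]
  refine sum_le_sum fun x _ => sum_le_sum fun y _ => ?_
  by_cases hd : d x y = 0
  · simp [hd]
  · rw [if_neg hd]
    nlinarith [mul_le_mul_of_nonneg_left (hdtil x y hd) (mul_nonneg (hp.1 x) (hW.1 x y))]

variable [DecidableEq Xh]

/-- `W` with the fraction `l` of the mass it puts on letters of positive distortion moved to
the letter `y₀ x`. -/
noncomputable def shiftToZero (d W : X → Xh → ℝ) (y₀ : X → Xh) (l : ℝ) : X → Xh → ℝ :=
  fun x y => W x y - l * (if d x y = 0 then 0 else W x y)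
    + if y = y₀ x then l * posDistMass d W x else 0

variable {y₀ : X → Xh} {l : ℝ}

lemma isChannel_shiftToZero (hW : IsChannel W) (hl0 : 0 ≤ l) (hl1 : l ≤ 1) :
    IsChannel (shiftToZero d W y₀ l) := by
  have hmass : ∀ x, 0 ≤ posDistMass d W x := fun x =>
    sum_nonneg fun y _ => by split_ifs <;> simp [hW.1 x y]
  refine ⟨fun x y => ?_, fun x => ?_⟩
  · have hW0 := hW.1 x y
    have : 0 ≤ W x y - l * (if d x y = 0 then 0 else W x y) := by
      split_ifs <;> nlinarith
    have : 0 ≤ if y = y₀ x then l * posDistMass d W x else 0 := by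
      split_ifs <;> simp [mul_nonneg hl0 (hmass x)]
    simp only [shiftToZero]
    linarith
  · simp only [shiftToZero, sum_add_distrib, sum_sub_distrib, ← mul_sum, sum_ite_eq',
      mem_univ, if_true, hW.2 x, posDistMass]
    ring

lemma avgDist_shiftToZero (hy₀ : ∀ x, d x (y₀ x) = 0) (p : X → ℝ) :
    avgDist d p (shiftToZero d W y₀ l) = (1 - l) * avgDist d p W := by
  simp only [avgDist, mul_sum]
  refine sum_congr rfl fun x _ => sum_congr rfl fun y _ => ?_
  by_cases hd : d x y = 0
  · simp [hd]
  · have hy : y ≠ y₀ x := fun h => hd (h ▸ hy₀ x)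
    simp only [shiftToZero, if_neg hd, if_neg hy]
    ring

lemma sum_abs_shiftToZero_sub (hy₀ : ∀ x, d x (y₀ x) = 0) (hW : IsChannel W) (hl0 : 0 ≤ l)
    (x : X) : ∑ y, |shiftToZero d W y₀ l x y - W x y| = 2 * l * posDistMass d W x := by
  have hpoint : ∀ y, |shiftToZero d W y₀ l x y - W x y|
      = (if y = y₀ x then l * posDistMass d W x else 0)
        + l * (if d x y = 0 then 0 else W x y) := by
    intro y
    have hmass : 0 ≤ posDistMass d W x :=
      sum_nonneg fun y _ => by split_ifs <;> simp [hW.1 x y]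
    by_cases hy : y = y₀ x
    · subst hy
      simp [shiftToZero, hy₀ x, abs_of_nonneg (mul_nonneg hl0 hmass)]
    · by_cases hd : d x y = 0
      · simp [shiftToZero, hd, hy]
      · simp [shiftToZero, hd, hy, abs_of_nonneg (mul_nonneg hl0 (hW.1 x y))]
  simp only [hpoint, sum_add_distrib, sum_ite_eq', mem_univ, if_true, ← mul_sum, posDistMass]
  ring

end Modification

lemma exists_channel_close {X Xh : Type*} [Fintype X] [Fintype Xh] {d : X → Xh → ℝ}
    {dstar dtil D : ℝ} (hd0 : ∀ x y, 0 ≤ d x y) (hdstar : ∀ x y, d x y ≤ dstar)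
    (hdstar0 : 0 ≤ dstar) (hzero : ∀ x, ∃ y, d x y = 0) (hdtil_pos : 0 < dtil)
    (hdtil : ∀ x y, d x y ≠ 0 → dtil ≤ d x y) {p q : X → ℝ} (hp : IsPMF p) (hD : 0 ≤ D)
    {W : X → Xh → ℝ} (hW : IsChannel W) (hWD : avgDist d q W ≤ D) :
    ∃ W', IsChannel W' ∧ avgDist d p W' ≤ D ∧
      ∑ z, |jointDist p W' z - jointDist p W z| ≤ 2 * dstar * (∑ x, |p x - q x|) / dtil := by
  classical
  choose y₀ hy₀ using hzero
  set t := ∑ x, |p x - q x|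
  have hslack : 0 ≤ dstar * t := mul_nonneg hdstar0 (sum_nonneg fun x _ => abs_nonneg _)
  -- `l` is chosen so that `(1 - l) * (D + dstar * t) = D`
  set l := dstar * t / (D + dstar * t)
  have hl0 : 0 ≤ l := by positivity
  have hl1 : l ≤ 1 := div_le_one_of_le₀ (by linarith) (by positivity)
  have hlD : l * (D + dstar * t) = dstar * t := by
    rcases (add_nonneg hD hslack).eq_or_lt with h | h
    · rw [← h, mul_zero]; linarith
    · exact div_mul_cancel₀ _ h.ne'
  have hpW : avgDist d p W ≤ D + dstar * t := by
    linarith [avgDist_sub_le (p := p) (q := q) hd0 hdstar hW]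
  refine ⟨shiftToZero d W y₀ l, isChannel_shiftToZero hW hl0 hl1, ?_, ?_⟩
  · rw [avgDist_shiftToZero hy₀]
    nlinarith [mul_le_mul_of_nonneg_left hpW (sub_nonneg.2 hl1)]
  · rw [sum_abs_sub_jointDist_of_input hp]
    simp_rw [sum_abs_shiftToZero_sub hy₀ hW hl0]
    have hmass := mul_sum_posDistMass_le hdtil hp hW
    rw [le_div_iff₀ hdtil_pos]
    calc (∑ x, p x * (2 * l * posDistMass d W x)) * dtil
        = 2 * l * (dtil * ∑ x, p x * posDistMass d W x) := by
          rw [mul_sum, mul_sum, sum_mul]; exact sum_congr rfl fun x _ => by ring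
      _ ≤ 2 * l * (D + dstar * t) := by gcongr; exact hmass.trans hpW
      _ = 2 * dstar * t := by rw [mul_assoc, hlD]; ring

section RateDistortion

variable {X Xh : Type*} [Fintype X] [Fintype Xh] {d : X → Xh → ℝ} {p : X → ℝ} {D : ℝ}

def detChannel [DecidableEq Xh] (f : X → Xh) : X → Xh → ℝ :=
  fun x y => if y = f x then 1 else 0

lemma isChannel_detChannel [DecidableEq Xh] (f : X → Xh) : IsChannel (detChannel f) :=
  ⟨fun x y => by unfold detChannel; split_ifs <;> norm_num, fun x => by simp [detChannel]⟩

lemma avgDist_detChannel [DecidableEq Xh] {f : X → Xh} (hf : ∀ x, d x (f x) = 0) :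
    avgDist d p (detChannel f) = 0 :=
  sum_eq_zero fun x _ => sum_eq_zero fun y _ => by
    by_cases h : y = f x <;> simp [detChannel, h, hf]

lemma RD_le (hp : IsPMF p) {W : X → Xh → ℝ} (hW : IsChannel W) (hWD : avgDist d p W ≤ D) :
    RD d p D ≤ mutInfo p W :=
  csInf_le ⟨0, fun _ ⟨_, hW, _, hr⟩ => hr ▸ mutInfo_nonneg hp hW⟩ ⟨W, hW, hWD, rfl⟩

lemma le_RD (hzero : ∀ x, ∃ y, d x y = 0) (hD : 0 ≤ D) {c : ℝ}
    (h : ∀ W, IsChannel W → avgDist d p W ≤ D → c ≤ mutInfo p W) : c ≤ RD d p D := by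
  classical
  choose f hf using hzero
  exact le_csInf
    ⟨_, detChannel f, isChannel_detChannel f, (avgDist_detChannel hf).le.trans hD, rfl⟩
    fun _ ⟨W, hW, hWD, hr⟩ => hr ▸ h W hW hWD

lemma RD_eq_zero_of_forall_eq_zero (hp : IsPMF p) (hD : 0 ≤ D) {y₀ : Xh}
    (hy₀ : ∀ x, d x y₀ = 0) : RD d p D = 0 := by
  classical
  have hW := isChannel_detChannel (X := X) fun _ => y₀
  have hout : ent (outDist p (detChannel fun _ => y₀)) = 0 := by
    simp [ent, outDist, detChannel, hp.2]
  refine le_antisymm ?_ (le_RD (fun _ => ⟨y₀, hy₀ _⟩) hD fun W hW _ => mutInfo_nonneg hp hW)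
  exact (RD_le hp hW ((avgDist_detChannel hy₀).le.trans hD)).trans
    ((mutInfo_le_ent_outDist hp hW).trans hout.le)

end RateDistortion

lemma RD_le_RD_add {X Xh : Type*} [Fintype X] [Fintype Xh] {d : X → Xh → ℝ} {dstar dtil : ℝ}
    (hd0 : ∀ x y, 0 ≤ d x y) (hdstar : ∀ x y, d x y ≤ dstar) (hzero : ∀ x, ∃ y, d x y = 0)
    (hdtil_pos : 0 < dtil) (hdtil : ∀ x y, d x y ≠ 0 → dtil ≤ d x y) (hdtil_le : dtil ≤ dstar)
    {p q : X → ℝ} (hp : IsPMF p) (hq : IsPMF q) {t : ℝ} (ht : ∑ x, |p x - q x| = t)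
    (ht0 : 0 < t) (h1 : t ≤ dtil / (4 * dstar)) {D : ℝ} (hD : 0 ≤ D) :
    RD d p D ≤ RD d q D +
      (7 * dstar / dtil) * t * log ((Fintype.card X : ℝ) * (Fintype.card Xh : ℝ) / t) := by
  obtain ⟨x⟩ := hp.nonempty
  obtain ⟨y, -⟩ := hzero x
  have hdstar0 : 0 < dstar := hdtil_pos.trans_le hdtil_le
  set M : ℝ := (Fintype.card X : ℝ) * (Fintype.card Xh : ℝ)
  set k := dstar / dtil
  have hk : 1 ≤ k := (one_le_div hdtil_pos).2 hdtil_le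
  have ht4 : 4 * k * t ≤ 1 := by
    rw [le_div_iff₀ (by positivity)] at h1
    simp only [k]; field_simp; linarith
  have hM : 1 ≤ M := one_le_mul_of_one_le_of_one_le
    (Nat.one_le_cast.2 (Fintype.card_pos_iff.2 ⟨x⟩))
    (Nat.one_le_cast.2 (Fintype.card_pos_iff.2 ⟨y⟩))
  set L := log (M / t)
  have hL : 0 ≤ L := log_nonneg ((one_le_div ht0).2 (by nlinarith))
  rw [← sub_le_iff_le_add]
  refine le_RD hzero hD fun W hW hWD => ?_
  obtain ⟨W', hW', hW'D, hclose⟩ :=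
    exists_channel_close hd0 hdstar hdstar0.le hzero hdtil_pos hdtil hp hD hW hWD
  rw [ht] at hclose
  have hs : 2 * dstar * t / dtil = 2 * k * t := by simp only [k]; ring
  rw [hs] at hclose
  have hinput : |mutInfo p W - mutInfo q W| ≤ 3 * (t * L) :=
    abs_mutInfo_sub_le_of_input hp hq hW ht.le (by nlinarith)
  have hchannel : |mutInfo p W' - mutInfo p W| ≤ 2 * (2 * k * t * log (M / (2 * k * t))) :=
    abs_mutInfo_sub_le_of_channel hp hW' hW hclose (by nlinarith)
  have hlog : log (M / (2 * k * t)) ≤ L :=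
    log_le_log (by positivity) (div_le_div_of_nonneg_left (by positivity) ht0 (by nlinarith))
  have hsL : 2 * k * t * log (M / (2 * k * t)) ≤ 2 * k * t * L :=
    mul_le_mul_of_nonneg_left hlog (by positivity)
  have hkL : t * L ≤ k * (t * L) := le_mul_of_one_le_left (by positivity) hk
  have := RD_le hp hW' hW'D
  have h7 : 7 * dstar / dtil * t * L = 7 * k * (t * L) := by simp only [k]; ring
  rw [abs_le] at hinput hchannel
  nlinarith

theorem stmt8_general {X Xh : Type*} [Fintype X] [Fintype Xh]
    (d : X → Xh → ℝ) (dstar dtil : ℝ)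
    (hdstar : ∀ x y, d x y ≤ dstar)
    (hzero : ∀ x, ∃ y, d x y = 0)
    (hdtil_pos : 0 < dtil) (hdtil : ∀ x y, d x y ≠ 0 → dtil ≤ d x y)
    (p q : X → ℝ) (hp : IsPMF p) (hq : IsPMF q)
    (h1 : ∑ x, |p x - q x| ≤ dtil / (4 * dstar))
    (D : ℝ) (hD : 0 ≤ D) :
    |RD d p D - RD d q D| ≤
      (7 * dstar / dtil) * (∑ x, |p x - q x|) *
        Real.log ((Fintype.card X : ℝ) * (Fintype.card Xh : ℝ) / ∑ x, |p x - q x|) := by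
  have hd0 : ∀ x y, 0 ≤ d x y := fun x y =>
    (eq_or_ne (d x y) 0).elim (fun h => h.ge) fun h => hdtil_pos.le.trans (hdtil x y h)
  rcases (sum_nonneg fun x _ => abs_nonneg (p x - q x)).eq_or_lt with ht0 | ht0
  · have hpq : p = q := funext fun x => sub_eq_zero.1 <| abs_eq_zero.1 <|
      (sum_eq_zero_iff_of_nonneg fun x _ => abs_nonneg _).1 ht0.symm x (mem_univ x)
    simp [hpq]
  set t := ∑ x, |p x - q x|
  by_cases hall : ∀ x y, d x y = 0
  · obtain ⟨x⟩ := hp.nonempty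
    obtain ⟨y, -⟩ := hzero x
    rw [RD_eq_zero_of_forall_eq_zero hp hD fun x => hall x y,
      RD_eq_zero_of_forall_eq_zero hq hD fun x => hall x y, sub_self, abs_zero, mul_assoc]
    have hdstar0 : 0 ≤ dstar := (hd0 x y).trans (hdstar x y)
    have hXh : (1 : ℝ) ≤ Fintype.card Xh := Nat.one_le_cast.2 (Fintype.card_pos_iff.2 ⟨y⟩)
    exact mul_nonneg (by positivity) (mul_log_div_nonneg ht0.le
      ((hp.sum_abs_sub_le_card hq).trans (le_mul_of_one_le_right (by positivity) hXh)))
  simp only [not_forall] at hall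
  obtain ⟨x, y, hxy⟩ := hall
  have hdtil_le : dtil ≤ dstar := (hdtil x y hxy).trans (hdstar x y)
  have hqp : ∑ x, |q x - p x| = t := sum_congr rfl fun x _ => abs_sub_comm _ _
  rw [abs_sub_le_iff]
  constructor
  · linarith [RD_le_RD_add hd0 hdstar hzero hdtil_pos hdtil hdtil_le hp hq rfl ht0 h1 hD]
  · linarith [RD_le_RD_add hd0 hdstar hzero hdtil_pos hdtil hdtil_le hq hp hqp ht0 h1 hD]

/-- Uniform continuity of `R(p,D)` in `p` (Lemma: zero-in-every-row distortion):
if `‖p-q‖₁ ≤ d̃/(4d*)` then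
`|R(p,D) - R(q,D)| ≤ (7d*/d̃) · ‖p-q‖₁ · ln(|X|·|X̂| / ‖p-q‖₁)`. -/
theorem stmt8 {X Xh : Type*} [Fintype X] [Fintype Xh]
    (d : X → Xh → ℝ) (dstar dtil : ℝ)
    (hd0 : ∀ x y, 0 ≤ d x y) (hdstar : ∀ x y, d x y ≤ dstar)
    (hzero : ∀ x, ∃ y, d x y = 0)
    (hdtil_pos : 0 < dtil) (hdtil : ∀ x y, d x y ≠ 0 → dtil ≤ d x y)
    (p q : X → ℝ) (hp : IsPMF p) (hq : IsPMF q)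
    (h1 : ∑ x, |p x - q x| ≤ dtil / (4 * dstar))
    (D : ℝ) (hD : 0 ≤ D) :
    |RD d p D - RD d q D| ≤
      (7 * dstar / dtil) * (∑ x, |p x - q x|) *
        Real.log ((Fintype.card X : ℝ) * (Fintype.card Xh : ℝ) / ∑ x, |p x - q x|) :=
  stmt8_general d dstar dtil hdstar hzero hdtil_pos hdtil p q hp hq h1 D hD
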